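/- arXiv:1212.6378 — 2 statements merged into one kernel-verified Lean document; each statement's English description precedes it below -/
import Mathlib

section
/- Let ρ be a 2d×2d SPPT state built from X₁, X₂, S with the SPPT condition, rank(X₁) = k, and reduced 2k×2k PPT state τ as in the rank-reduction construction. If τ is separable on ℂ²⊗ℂᵏ, then ρ is separable on ℂ²⊗ℂᵈ. -/
/-! With `X₁ = U (D_k ⊕ 0) V†`, every block of `ρ` built from `X₁` has the form
`X₁† M X₁ = W (D_k (U† M U)₁₁ D_k) W†`, where `W` consists of the first `k` columns of `V`.
Comparing with the blocks of `τ` gives `ρ = (1 ⊗ W) τ (1 ⊗ W)† + |1⟩⟨1| ⊗ X₂†X₂`.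
Separability is preserved by local operations `1 ⊗ W` and by sums, and the second term is a
product of positive matrices, so `ρ` is separable. -/

open Matrix Kronecker Finset ComplexOrder

/-- 2x2 block matrix with n×n blocks, indexed by `Fin 2 × n`. -/
def blk {n : Type*} (A B C D : Matrix n n ℂ) :
    Matrix (Fin 2 × n) (Fin 2 × n) ℂ := fun p q =>
  if p.1 = 0 then (if q.1 = 0 then A p.2 q.2 else B p.2 q.2)
  else (if q.1 = 0 then C p.2 q.2 else D p.2 q.2)

/-- Partial transpose on the first (qubit) factor. -/
def ptA {n : Type*} (ρ : Matrix (Fin 2 × n) (Fin 2 × n) ℂ) :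
    Matrix (Fin 2 × n) (Fin 2 × n) ℂ := fun p q => ρ (q.1, p.2) (p.1, q.2)

/-- Separability of an (unnormalized) state on ℂ²⊗ℂⁿ. -/
def SepState {n : Type*} [Fintype n] (ρ : Matrix (Fin 2 × n) (Fin 2 × n) ℂ) : Prop :=
  ∃ (N : ℕ) (σ : Fin N → Matrix (Fin 2) (Fin 2) ℂ) (P : Fin N → Matrix n n ℂ),
    (∀ i, (σ i).PosSemidef) ∧ (∀ i, (P i).PosSemidef) ∧ ρ = ∑ i, σ i ⊗ₖ P i

section Blk

variable {n : Type*}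

lemma blk_conjTranspose (A B C D : Matrix n n ℂ) :
    (blk A B C D)ᴴ = blk Aᴴ Cᴴ Bᴴ Dᴴ := by
  ext ⟨a, x⟩ ⟨b, y⟩
  fin_cases a <;> fin_cases b <;> simp [blk]

lemma blk_mul [Fintype n] (A B C D A' B' C' D' : Matrix n n ℂ) :
    blk A B C D * blk A' B' C' D' =
      blk (A * A' + B * C') (A * B' + B * D') (C * A' + D * C') (C * B' + D * D') := by
  ext ⟨a, x⟩ ⟨b, y⟩
  rw [mul_apply, Fintype.sum_prod_type, Fin.sum_univ_two]
  fin_cases a <;> fin_cases b <;> simp [blk, mul_apply]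

lemma blk_add (A B C D A' B' C' D' : Matrix n n ℂ) :
    blk A B C D + blk A' B' C' D' = blk (A + A') (B + B') (C + C') (D + D') := by
  ext ⟨a, x⟩ ⟨b, y⟩
  fin_cases a <;> fin_cases b <;> simp [blk]

lemma conjTranspose_blk_mul_blk [Fintype n] (A B D : Matrix n n ℂ) :
    (blk A B 0 D)ᴴ * blk A B 0 D = blk (Aᴴ * A) (Aᴴ * B) (Bᴴ * A) (Bᴴ * B + Dᴴ * D) := by
  rw [blk_conjTranspose, blk_mul]
  simp

lemma kronecker_eq_blk (σ : Matrix (Fin 2) (Fin 2) ℂ) (M : Matrix n n ℂ) :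
    σ ⊗ₖ M = blk (σ 0 0 • M) (σ 0 1 • M) (σ 1 0 • M) (σ 1 1 • M) := by
  ext ⟨a, x⟩ ⟨b, y⟩
  fin_cases a <;> fin_cases b <;> simp [blk]

lemma one_kronecker_mul_blk_mul [Fintype n] {n' : Type*} (W : Matrix n' n ℂ)
    (A B C D : Matrix n n ℂ) :
    ((1 : Matrix (Fin 2) (Fin 2) ℂ) ⊗ₖ W) * blk A B C D *
        ((1 : Matrix (Fin 2) (Fin 2) ℂ) ⊗ₖ W)ᴴ =
      blk (W * A * Wᴴ) (W * B * Wᴴ) (W * C * Wᴴ) (W * D * Wᴴ) := by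
  ext ⟨a, x⟩ ⟨b, y⟩
  simp only [mul_apply, Fintype.sum_prod_type, Fin.sum_univ_two, conjTranspose_apply,
    kroneckerMap_apply]
  fin_cases a <;> fin_cases b <;> simp [blk, mul_apply, one_apply]

end Blk

namespace SepState

variable {n : Type*} [Fintype n]

lemma kronecker {σ : Matrix (Fin 2) (Fin 2) ℂ} {P : Matrix n n ℂ} (hσ : σ.PosSemidef)
    (hP : P.PosSemidef) : SepState (σ ⊗ₖ P) :=
  ⟨1, fun _ => σ, fun _ => P, fun _ => hσ, fun _ => hP, by simp⟩

lemma add {ρ ρ' : Matrix (Fin 2 × n) (Fin 2 × n) ℂ} (h : SepState ρ) (h' : SepState ρ') :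
    SepState (ρ + ρ') := by
  obtain ⟨N, σ, P, hσ, hP, rfl⟩ := h
  obtain ⟨N', σ', P', hσ', hP', rfl⟩ := h'
  refine ⟨N + N', Fin.append σ σ', Fin.append P P', Fin.addCases ?_ ?_, Fin.addCases ?_ ?_,
    by simp [Fin.sum_univ_add]⟩ <;> simpa

lemma one_kronecker_mul_mul {n' : Type*} [Fintype n'] {ρ : Matrix (Fin 2 × n) (Fin 2 × n) ℂ}
    (h : SepState ρ) (W : Matrix n' n ℂ) :
    SepState (((1 : Matrix (Fin 2) (Fin 2) ℂ) ⊗ₖ W) * ρ *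
      ((1 : Matrix (Fin 2) (Fin 2) ℂ) ⊗ₖ W)ᴴ) := by
  obtain ⟨N, σ, P, hσ, hP, rfl⟩ := h
  refine ⟨N, σ, fun i => W * P i * Wᴴ, hσ, fun i => (hP i).mul_mul_conjTranspose_same W, ?_⟩
  rw [Matrix.mul_sum, Matrix.sum_mul]
  refine Finset.sum_congr rfl fun i _ => ?_
  rw [conjTranspose_kronecker, conjTranspose_one, ← mul_kronecker_mul, ← mul_kronecker_mul,
    Matrix.one_mul, Matrix.mul_one]

end SepState

lemma conj_conjTranspose_mul_self_of_mul_conjTranspose_eq_one {R n : Type*} [Semiring R]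
    [StarRing R] [Fintype n] [DecidableEq n] {U : Matrix n n R} (hU : U * Uᴴ = 1)
    (S : Matrix n n R) :
    Uᴴ * (Sᴴ * S) * U = (Uᴴ * S * U)ᴴ * (Uᴴ * S * U) := by
  simp only [conjTranspose_mul, conjTranspose_conjTranspose, Matrix.mul_assoc]
  rw [← Matrix.mul_assoc U, hU, Matrix.one_mul]

section Blocks

variable {R : Type*} {n o : Type*}

lemma toBlocks₁₁_one [Zero R] [One R] [DecidableEq n] [DecidableEq o] :
    (1 : Matrix (n ⊕ o) (n ⊕ o) R).toBlocks₁₁ = 1 := by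
  rw [← fromBlocks_one, toBlocks_fromBlocks₁₁]

lemma toBlocks₁₁_conjTranspose [Star R] (M : Matrix (n ⊕ o) (n ⊕ o) R) :
    Mᴴ.toBlocks₁₁ = M.toBlocks₁₁ᴴ :=
  rfl

variable [Semiring R] [StarRing R] [Fintype n] [Fintype o]

lemma toBlocks₁₁_conjTranspose_mul_self (M : Matrix (n ⊕ o) (n ⊕ o) R) :
    (Mᴴ * M).toBlocks₁₁ = M.toBlocks₁₁ᴴ * M.toBlocks₁₁ + M.toBlocks₂₁ᴴ * M.toBlocks₂₁ := by
  conv_lhs => rw [← fromBlocks_toBlocks M]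
  rw [fromBlocks_conjTranspose, fromBlocks_multiply, toBlocks_fromBlocks₁₁]

lemma conjTranspose_fromBlocks_mul_fromBlocks {D : Matrix n n R} (hD : Dᴴ = D)
    (M : Matrix (n ⊕ o) (n ⊕ o) R) :
    (fromBlocks D 0 0 0)ᴴ * M * fromBlocks D 0 0 0 = fromBlocks (D * M.toBlocks₁₁ * D) 0 0 0 := by
  conv_lhs => rw [← fromBlocks_toBlocks M]
  rw [fromBlocks_conjTranspose, fromBlocks_multiply, fromBlocks_multiply]
  simp [hD, Matrix.mul_assoc]

lemma mul_fromBlocks_zero_mul_conjTranspose {l : Type*} (V : Matrix l (n ⊕ o) R)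
    (K : Matrix n n R) :
    V * (fromBlocks K 0 0 0 : Matrix (n ⊕ o) (n ⊕ o) R) * Vᴴ =
      V.submatrix id Sum.inl * K * (V.submatrix id Sum.inl)ᴴ := by
  ext x y
  simp [mul_apply, Fintype.sum_sum_type]

lemma conjTranspose_mul_mul_of_eq_mul_fromBlocks_mul {l l' : Type*} [Fintype l] [Fintype l']
    {U : Matrix l (n ⊕ o) R} {V : Matrix l' (n ⊕ o) R} {D : Matrix n n R} {X : Matrix l l' R}
    (hD : Dᴴ = D) (hX : X = U * (fromBlocks D 0 0 0 : Matrix (n ⊕ o) (n ⊕ o) R) * Vᴴ)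
    (M : Matrix l l R) :
    Xᴴ * M * X =
      V.submatrix id Sum.inl * (D * (Uᴴ * M * U).toBlocks₁₁ * D) * (V.submatrix id Sum.inl)ᴴ := by
  rw [← mul_fromBlocks_zero_mul_conjTranspose, ← conjTranspose_fromBlocks_mul_fromBlocks hD, hX]
  simp only [conjTranspose_mul, conjTranspose_conjTranspose, Matrix.mul_assoc]

end Blocks

theorem stmt10_general {k m : ℕ}
    (U V : Matrix (Fin k ⊕ Fin m) (Fin k ⊕ Fin m) ℂ)
    (hU : U ∈ Matrix.unitaryGroup (Fin k ⊕ Fin m) ℂ)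
    (σv : Fin k → ℝ)
    (Dk : Matrix (Fin k) (Fin k) ℂ) (hDk : Dk = Matrix.diagonal (fun i => (σv i : ℂ)))
    (X₁ X₂ S : Matrix (Fin k ⊕ Fin m) (Fin k ⊕ Fin m) ℂ)
    (hX₁ : X₁ = U * Matrix.fromBlocks Dk 0 0 0 * Vᴴ)
    (St : Matrix (Fin k ⊕ Fin m) (Fin k ⊕ Fin m) ℂ) (hSt : St = Uᴴ * S * U)
    (τ : Matrix (Fin 2 × Fin k) (Fin 2 × Fin k) ℂ)
    (hτ : τ = blk (Dk * Dk) (Dk * St.toBlocks₁₁ * Dk) (Dk * St.toBlocks₁₁ᴴ * Dk)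
        (Dk * (St.toBlocks₁₁ᴴ * St.toBlocks₁₁ + St.toBlocks₂₁ᴴ * St.toBlocks₂₁) * Dk))
    (ρ : Matrix (Fin 2 × (Fin k ⊕ Fin m)) (Fin 2 × (Fin k ⊕ Fin m)) ℂ)
    (hρ : ρ = (blk X₁ (S * X₁) 0 X₂)ᴴ * blk X₁ (S * X₁) 0 X₂)
    (hsep : SepState τ) :
    SepState ρ := by
  have hUU : Uᴴ * U = 1 := mem_unitaryGroup_iff'.mp hU
  have hDkH : Dkᴴ = Dk := by simp [hDk]
  set W := V.submatrix id Sum.inl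
  have hconj : ∀ M, X₁ᴴ * M * X₁ = W * (Dk * (Uᴴ * M * U).toBlocks₁₁ * Dk) * Wᴴ :=
    conjTranspose_mul_mul_of_eq_mul_fromBlocks_mul hDkH hX₁
  have h₁₁ : X₁ᴴ * X₁ = W * (Dk * Dk) * Wᴴ := by
    simpa [hUU, toBlocks₁₁_one] using hconj 1
  have h₁₂ : X₁ᴴ * (S * X₁) = W * (Dk * St.toBlocks₁₁ * Dk) * Wᴴ := by
    rw [← Matrix.mul_assoc, hconj, hSt]
  have h₂₁ : (S * X₁)ᴴ * X₁ = W * (Dk * St.toBlocks₁₁ᴴ * Dk) * Wᴴ := by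
    rw [conjTranspose_mul, hconj, ← toBlocks₁₁_conjTranspose, hSt]
    simp only [conjTranspose_mul, conjTranspose_conjTranspose, Matrix.mul_assoc]
  have h₂₂ : (S * X₁)ᴴ * (S * X₁) =
      W * (Dk * (St.toBlocks₁₁ᴴ * St.toBlocks₁₁ + St.toBlocks₂₁ᴴ * St.toBlocks₂₁) * Dk) * Wᴴ := by
    rw [← toBlocks₁₁_conjTranspose_mul_self, hSt,
      ← conj_conjTranspose_mul_self_of_mul_conjTranspose_eq_one (mem_unitaryGroup_iff.mp hU),
      ← hconj]
    simp only [conjTranspose_mul, Matrix.mul_assoc]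
  have hρ' : ρ = ((1 : Matrix (Fin 2) (Fin 2) ℂ) ⊗ₖ W) * τ *
      ((1 : Matrix (Fin 2) (Fin 2) ℂ) ⊗ₖ W)ᴴ + diagonal ![0, 1] ⊗ₖ (X₂ᴴ * X₂) := by
    rw [hρ, conjTranspose_blk_mul_blk, h₁₁, h₁₂, h₂₁, h₂₂, hτ, one_kronecker_mul_blk_mul,
      kronecker_eq_blk, blk_add]
    simp
  rw [hρ']
  refine (hsep.one_kronecker_mul_mul W).add (.kronecker ?_ (posSemidef_conjTranspose_mul_self X₂))
  exact posSemidef_diagonal_iff.mpr fun i => by fin_cases i <;> simp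

theorem stmt10 {k m : ℕ}
    (U V : Matrix (Fin k ⊕ Fin m) (Fin k ⊕ Fin m) ℂ)
    (hU : U ∈ Matrix.unitaryGroup (Fin k ⊕ Fin m) ℂ)
    (hV : V ∈ Matrix.unitaryGroup (Fin k ⊕ Fin m) ℂ)
    (σv : Fin k → ℝ) (hσ : ∀ i, 0 < σv i)
    (Dk : Matrix (Fin k) (Fin k) ℂ) (hDk : Dk = Matrix.diagonal (fun i => (σv i : ℂ)))
    (X₁ X₂ S : Matrix (Fin k ⊕ Fin m) (Fin k ⊕ Fin m) ℂ)
    (hX₁ : X₁ = U * Matrix.fromBlocks Dk 0 0 0 * Vᴴ)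
    (hsppt : X₁ᴴ * Sᴴ * S * X₁ = X₁ᴴ * S * Sᴴ * X₁)
    (St : Matrix (Fin k ⊕ Fin m) (Fin k ⊕ Fin m) ℂ) (hSt : St = Uᴴ * S * U)
    (τ : Matrix (Fin 2 × Fin k) (Fin 2 × Fin k) ℂ)
    (hτ : τ = blk (Dk * Dk) (Dk * St.toBlocks₁₁ * Dk) (Dk * St.toBlocks₁₁ᴴ * Dk)
        (Dk * (St.toBlocks₁₁ᴴ * St.toBlocks₁₁ + St.toBlocks₂₁ᴴ * St.toBlocks₂₁) * Dk))
    (ρ : Matrix (Fin 2 × (Fin k ⊕ Fin m)) (Fin 2 × (Fin k ⊕ Fin m)) ℂ)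
    (hρ : ρ = (blk X₁ (S * X₁) 0 X₂)ᴴ * blk X₁ (S * X₁) 0 X₂)
    (hsep : SepState τ) :
    SepState ρ :=
  stmt10_general U V hU σv Dk hDk X₁ X₂ S hX₁ St hSt τ hτ ρ hρ hsep
end

section
/- Fix 0 < b < 1, β₁ = √((1−b)/(2b)), β₂ = √((1+b)/(2b)), X₁ = diag(1,1,1,1,0), S as in the previous construction, and X₂ = 0. Then the 10×10 matrix ϱ₀ = X†X with X = [[X₁, SX₁],[0, 0]] is an SPPT state (i.e., positive semidefinite with partial transpose of the form Y†Y where Y = [[X₁, S†X₁],[0,0]]) that is not separable on ℂ²⊗ℂ⁵. -/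
open Matrix Kronecker Finset ComplexOrder

/-!
`ϱ₀` is the Gram matrix of the block row `[X₁, S X₁]`. Partial transposition swaps its off-diagonal
blocks, so `ϱ₀^Γ` is the Gram matrix of `[X₁, Sᴴ X₁]` as soon as `X₁ Sᴴ S X₁ = X₁ S Sᴴ X₁`, which
for this `S` is the identity `β₂² = β₁² + 1`.

If `ϱ₀ = ∑ σᵢ ⊗ Pᵢ` with positive semidefinite factors, every summand `σᵢ ⊗ Pᵢ` vanishes on
`ker ϱ₀` and every `σᵢᵀ ⊗ Pᵢ` vanishes on `ker ϱ₀^Γ` (range criterion). Five explicit kernel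
vectors of the form `(u, v)` give, in the coordinate `(0, 0)`, linear relations between the first
rows of `σᵢ` and `Pᵢ` which force `(σᵢ)₀₀ (Pᵢ)₀₀ = 0`; summing contradicts `(ϱ₀)₍₀₀₎₍₀₀₎ = 1`.
-/

theorem Matrix.PosSemidef.mulVec_eq_zero_of_sum {ι m 𝕜 : Type*} [RCLike 𝕜] [Fintype m]
    {s : Finset ι} {M : ι → Matrix m m 𝕜} (hM : ∀ i ∈ s, (M i).PosSemidef) {z : m → 𝕜}
    (hz : (∑ i ∈ s, M i) *ᵥ z = 0) {i : ι} (hi : i ∈ s) : M i *ᵥ z = 0 := by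
  have hsum : ∑ j ∈ s, star z ⬝ᵥ M j *ᵥ z = 0 := by
    rw [← dotProduct_sum, ← sum_mulVec, hz, dotProduct_zero]
  rw [← (hM i hi).dotProduct_mulVec_zero_iff]
  exact (sum_eq_zero_iff_of_nonneg fun j hj => (hM j hj).dotProduct_mulVec_nonneg z).mp hsum i hi

section Blocks

variable {n : Type*}

def blkVec (u v : n → ℂ) : Fin 2 × n → ℂ := fun p => if p.1 = 0 then u p.2 else v p.2

def blkGram [Fintype n] (A B : Matrix n n ℂ) : Matrix (Fin 2 × n) (Fin 2 × n) ℂ :=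
  (blk A B 0 0)ᴴ * blk A B 0 0

theorem ptA_blk (A B C D : Matrix n n ℂ) : ptA (blk A B C D) = blk A C B D := by
  ext ⟨i, j⟩ ⟨k, l⟩
  fin_cases i <;> fin_cases k <;> rfl

theorem blkVec_zero : blkVec (0 : n → ℂ) 0 = 0 := by
  ext ⟨i, j⟩
  simp [blkVec]

theorem ptA_sum_kronecker {N : ℕ} (σ : Fin N → Matrix (Fin 2) (Fin 2) ℂ)
    (P : Fin N → Matrix n n ℂ) :
    ptA (∑ i, σ i ⊗ₖ P i) = ∑ i, (σ i)ᵀ ⊗ₖ P i := by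
  ext p q
  simp [ptA, Matrix.sum_apply]

variable [Fintype n]

theorem blkGram_eq (A B : Matrix n n ℂ) :
    blkGram A B = blk (Aᴴ * A) (Aᴴ * B) (Bᴴ * A) (Bᴴ * B) := by
  ext ⟨i, j⟩ ⟨k, l⟩
  fin_cases i <;> fin_cases k <;>
    simp [blkGram, blk, mul_apply, Fintype.sum_prod_type]

theorem ptA_blkGram_mul (A S : Matrix n n ℂ) (h : Aᴴ * (Sᴴ * S) * A = Aᴴ * (S * Sᴴ) * A) :
    ptA (blkGram A (S * A)) = blkGram A (Sᴴ * A) := by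
  simp only [blkGram_eq, ptA_blk, conjTranspose_mul, conjTranspose_conjTranspose,
    Matrix.mul_assoc] at h ⊢
  rw [h]

theorem blk_mulVec_blkVec (A B : Matrix n n ℂ) (u v : n → ℂ) :
    blk A B 0 0 *ᵥ blkVec u v = blkVec (A *ᵥ u + B *ᵥ v) 0 := by
  ext ⟨i, j⟩
  fin_cases i <;> simp [blk, blkVec, mulVec, dotProduct, Fintype.sum_prod_type]

theorem blkGram_mulVec_blkVec {A B : Matrix n n ℂ} {u v : n → ℂ} (h : A *ᵥ u + B *ᵥ v = 0) :
    blkGram A B *ᵥ blkVec u v = 0 := by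
  rw [blkGram, ← mulVec_mulVec, blk_mulVec_blkVec, h, blkVec_zero, mulVec_zero]

theorem kronecker_mulVec_blkVec_apply_zero (σ : Matrix (Fin 2) (Fin 2) ℂ) (P : Matrix n n ℂ)
    (u v : n → ℂ) (j : n) :
    (σ ⊗ₖ P *ᵥ blkVec u v) (0, j) = σ 0 0 * (P *ᵥ u) j + σ 0 1 * (P *ᵥ v) j := by
  simp [mulVec, dotProduct, blkVec, Fintype.sum_prod_type, mul_sum, mul_assoc]

theorem kronecker_mulVec_eq_zero_of_eq_sum {N : ℕ}
    {σ : Fin N → Matrix (Fin 2) (Fin 2) ℂ} {P : Fin N → Matrix n n ℂ}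
    (hσ : ∀ i, (σ i).PosSemidef) (hP : ∀ i, (P i).PosSemidef)
    {ρ : Matrix (Fin 2 × n) (Fin 2 × n) ℂ} (hρ : ρ = ∑ i, σ i ⊗ₖ P i) (i : Fin N)
    {z : Fin 2 × n → ℂ} (hz : ρ *ᵥ z = 0) : σ i ⊗ₖ P i *ᵥ z = 0 :=
  PosSemidef.mulVec_eq_zero_of_sum (fun j _ => (hσ j).kronecker (hP j)) (hρ ▸ hz) (mem_univ i)

theorem kronecker_row_relation {A B P : Matrix n n ℂ}
    {σ : Matrix (Fin 2) (Fin 2) ℂ} (hker : ∀ z, blkGram A B *ᵥ z = 0 → σ ⊗ₖ P *ᵥ z = 0)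
    {u v : n → ℂ} (h : A *ᵥ u + B *ᵥ v = 0) (j : n) :
    σ 0 0 * (P *ᵥ u) j + σ 0 1 * (P *ᵥ v) j = 0 := by
  rw [← kronecker_mulVec_blkVec_apply_zero, hker _ (blkGram_mulVec_blkVec h), Pi.zero_apply]

end Blocks

def proj4 : Matrix (Fin 5) (Fin 5) ℂ := diagonal ![1, 1, 1, 1, 0]

def matS (c₁ c₂ : ℂ) : Matrix (Fin 5) (Fin 5) ℂ :=
  !![0, 1, 0, 0, c₁;
     0, 0, 1, 0, 0;
     0, 0, 0, 1, 0;
     0, 0, 0, 0, c₂;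
     c₂, 0, 0, c₁, 0]

theorem proj4_matS_normal {c₁ c₂ : ℝ} (h : c₂ ^ 2 = c₁ ^ 2 + 1) :
    proj4ᴴ * ((matS c₁ c₂)ᴴ * matS c₁ c₂) * proj4 =
      proj4ᴴ * (matS c₁ c₂ * (matS c₁ c₂)ᴴ) * proj4 := by
  have hC : (c₂ : ℂ) ^ 2 = c₁ ^ 2 + 1 := by exact_mod_cast h
  ext i j
  simp only [proj4, diagonal_conjTranspose, mul_apply, conjTranspose_apply, Fin.sum_univ_five]
  fin_cases i <;> fin_cases j <;> simp [matS] <;> grind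

theorem proj4_mulVec (v : Fin 5 → ℂ) : proj4 *ᵥ v = ![v 0, v 1, v 2, v 3, 0] := by
  ext j; fin_cases j <;> simp [proj4, mulVec_diagonal]

theorem matS_kernel_vectors (c₁ c₂ : ℝ) :
    proj4 *ᵥ ![0, 0, (c₂ : ℂ), 0, 0] + (matS c₁ c₂ * proj4) *ᵥ ![(c₁ : ℂ), 0, 0, -c₂, 0] = 0 ∧
    proj4 *ᵥ ![-1, 0, 0, 0, 0] + (matS c₁ c₂ * proj4) *ᵥ ![0, 1, 0, 0, 0] = 0 ∧
    proj4 *ᵥ ![0, -1, 0, 0, 0] + (matS c₁ c₂ * proj4) *ᵥ ![0, 0, 1, 0, 0] = 0 ∧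
    proj4 *ᵥ ![0, 0, -1, 0, 0] + ((matS c₁ c₂)ᴴ * proj4) *ᵥ ![0, 1, 0, 0, 0] = 0 ∧
    proj4 *ᵥ ![0, 0, 0, -1, 0] + ((matS c₁ c₂)ᴴ * proj4) *ᵥ ![0, 0, 1, 0, 0] = 0 := by
  simp only [← mulVec_mulVec, proj4_mulVec]
  refine ⟨?_, ?_, ?_, ?_, ?_⟩ <;> ext j <;>
    fin_cases j <;> simp [matS, mulVec, dotProduct, Fin.sum_univ_five, mul_comm]

/-- The relations eliminate to `β₁ a (c² x₁) = 0`, and then `(a x₀)² = (c x₁)² = 0`. -/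
theorem mul_eq_zero_of_shift_relations {β₁ β₂ a c e x₀ x₁ x₂ x₃ : ℂ} (hβ₁ : β₁ ≠ 0)
    (h₁ : a * x₀ = c * x₁) (h₂ : a * x₁ = c * x₂) (h₃ : a * x₂ = e * x₁) (h₄ : a * x₃ = e * x₂)
    (h₅ : a * β₂ * x₂ + c * (β₁ * x₀ - β₂ * x₃) = 0) : a * x₀ = 0 := by
  rcases eq_or_ne a 0 with ha | ha
  · rw [ha, zero_mul]
  have hc : c ^ 2 * x₁ = 0 := by
    have : β₁ * a * (c ^ 2 * x₁) = 0 := by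
      linear_combination a ^ 2 * h₅ - a ^ 2 * β₂ * h₃ - a * c * β₁ * h₁ + a * c * β₂ * h₄
        - a * β₂ * e * h₂
    simpa [hβ₁, ha] using this
  exact pow_eq_zero_iff two_ne_zero |>.mp (by linear_combination (a * x₀ + c * x₁) * h₁ + x₁ * hc)

theorem entry_mul_eq_zero_of_ker_le {c₁ c₂ : ℝ} (hc₁ : c₁ ≠ 0) {σ : Matrix (Fin 2) (Fin 2) ℂ}
    {P : Matrix (Fin 5) (Fin 5) ℂ}
    (hker : ∀ z, blkGram proj4 (matS c₁ c₂ * proj4) *ᵥ z = 0 → σ ⊗ₖ P *ᵥ z = 0)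
    (hker' : ∀ z, blkGram proj4 ((matS c₁ c₂)ᴴ * proj4) *ᵥ z = 0 → σᵀ ⊗ₖ P *ᵥ z = 0) :
    σ 0 0 * P 0 0 = 0 := by
  obtain ⟨k₁, k₂, k₃, k₄, k₅⟩ := matS_kernel_vectors c₁ c₂
  have e₁ := kronecker_row_relation hker k₁ 0
  have e₂ := kronecker_row_relation hker k₂ 0
  have e₃ := kronecker_row_relation hker k₃ 0
  have e₄ := kronecker_row_relation hker' k₄ 0
  have e₅ := kronecker_row_relation hker' k₅ 0
  simp only [Fin.isValue, mulVec, dotProduct, Fin.sum_univ_five, cons_val_zero, mul_zero,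
    cons_val_one, add_zero, Matrix.cons_val, zero_add, mul_neg, mul_one, transpose_apply]
    at e₁ e₂ e₃ e₄ e₅
  exact mul_eq_zero_of_shift_relations (β₂ := c₂) (c := σ 0 1) (e := σ 1 0) (x₁ := P 0 1)
    (x₂ := P 0 2) (x₃ := P 0 3) (Complex.ofReal_ne_zero.mpr hc₁)
    (by linear_combination -e₂) (by linear_combination -e₃) (by linear_combination -e₄)
    (by linear_combination -e₅) (by linear_combination e₁)

theorem stmt14 (b : ℝ) (hb0 : 0 < b) (hb1 : b < 1)
    (β₁ β₂ : ℝ) (hβ₁ : β₁ = Real.sqrt ((1 - b) / (2 * b)))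
    (hβ₂ : β₂ = Real.sqrt ((1 + b) / (2 * b)))
    (X₁ S : Matrix (Fin 5) (Fin 5) ℂ)
    (hX₁ : X₁ = Matrix.diagonal ![1, 1, 1, 1, 0])
    (hS : S = !![0, 1, 0, 0, (β₁ : ℂ);
                 0, 0, 1, 0, 0;
                 0, 0, 0, 1, 0;
                 0, 0, 0, 0, (β₂ : ℂ);
                 (β₂ : ℂ), 0, 0, (β₁ : ℂ), 0])
    (ϱ₀ : Matrix (Fin 2 × Fin 5) (Fin 2 × Fin 5) ℂ)
    (hϱ₀ : ϱ₀ = (blk X₁ (S * X₁) 0 0)ᴴ * blk X₁ (S * X₁) 0 0) :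
    ϱ₀.PosSemidef ∧
    ptA ϱ₀ = (blk X₁ (Sᴴ * X₁) 0 0)ᴴ * blk X₁ (Sᴴ * X₁) 0 0 ∧
    ¬ SepState ϱ₀ := by
  have hpos : 0 < 2 * b := by positivity
  have hβ₁0 : β₁ ≠ 0 := by
    rw [hβ₁]; exact (Real.sqrt_pos.mpr (div_pos (by linarith) hpos)).ne'
  have hβ : β₂ ^ 2 = β₁ ^ 2 + 1 := by
    rw [hβ₁, hβ₂, Real.sq_sqrt (div_pos (by linarith) hpos).le,
      Real.sq_sqrt (div_pos (by linarith) hpos).le]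
    field_simp
    ring
  change S = matS β₁ β₂ at hS
  change X₁ = proj4 at hX₁
  change ϱ₀ = blkGram X₁ (S * X₁) at hϱ₀
  subst hS hX₁ hϱ₀
  have hpt := ptA_blkGram_mul proj4 (matS β₁ β₂) (proj4_matS_normal hβ)
  refine ⟨posSemidef_conjTranspose_mul_self _, hpt, ?_⟩
  rintro ⟨N, σ, P, hσ, hP, hsum⟩
  have hterm (i : Fin N) : σ i 0 0 * P i 0 0 = 0 :=
    entry_mul_eq_zero_of_ker_le hβ₁0 (fun _ => kronecker_mulVec_eq_zero_of_eq_sum hσ hP hsum i)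
      (fun _ => kronecker_mulVec_eq_zero_of_eq_sum (fun j => (hσ j).transpose) hP
        (by rw [← hpt, hsum, ptA_sum_kronecker]) i)
  have h00 := congrFun (congrFun hsum (0, 0)) (0, 0)
  simp [blkGram_eq, blk, proj4, Matrix.sum_apply, hterm] at h00
end
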